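/- arXiv:1409.7676 — 5 statements merged into one kernel-verified Lean document; each statement's English description precedes it below -/
import Mathlib

section
/- Let d = (d_1,...,d_n) be a sequence of integers with d_i ≥ 2 for all i and d_i ≥ 3 for some i. Then the n×n symmetric matrix M with M_{ii} = -d_i, M_{i,i+1} = M_{i+1,i} = 1 (indices mod n, assuming n ≥ 3), and all other entries 0, is negative definite. -/
/-!
Summation by parts on the cycle gives
`xᵀ M x = -(∑ (dᵢ - 2) xᵢ² + ∑ (xᵢ - xᵢ₊₁)²)`, a sum of nonnegative terms.
If it vanished, `x` would be constant around the cycle and would vanish at an index with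
`dᵢ ≥ 3`, hence everywhere.
-/

/-- The intersection matrix of a cycle of curves with self-intersections `-d i`:
diagonal entries `-d i`, entries `1` between cyclically adjacent indices. -/
def cycleIntersectionMatrix (n : ℕ) [NeZero n] (d : Fin n → ℤ) : Matrix (Fin n) (Fin n) ℝ :=
  fun i j =>
    (if i = j then (-(d i : ℝ)) else 0) +
    (if j = i + 1 then 1 else 0) + (if i = j + 1 then 1 else 0)

section

variable {n : ℕ} [NeZero n]

theorem cycleIntersectionMatrix_mulVec_apply (d : Fin n → ℤ) (x : Fin n → ℝ) (i : Fin n) :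
    (cycleIntersectionMatrix n d).mulVec x i = -(d i : ℝ) * x i + x (i + 1) + x (i - 1) := by
  have hpred : ∀ j : Fin n, i = j + 1 ↔ j = i - 1 := fun j => by rw [eq_sub_iff_add_eq, eq_comm]
  simp only [cycleIntersectionMatrix, Matrix.mulVec, dotProduct, add_mul, ite_mul, zero_mul,
    one_mul, Finset.sum_add_distrib, hpred, Finset.sum_ite_eq, Finset.sum_ite_eq', Finset.mem_univ,
    if_true]

theorem Fin.apply_eq_apply_of_apply_add_one {α : Type*} {x : Fin n → α}
    (h : ∀ i, x (i + 1) = x i) (i j : Fin n) : x i = x j := by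
  open Fin.NatCast in
  have hcast : ∀ m : ℕ, x m = x 0 := by
    intro m
    induction m with
    | zero => simp
    | succ m ih => rw [Nat.cast_succ, h, ih]
  rw [← Fin.cast_val_eq_self i, ← Fin.cast_val_eq_self j, hcast, hcast]

theorem dotProduct_cycleIntersectionMatrix_mulVec (d : Fin n → ℤ) (x : Fin n → ℝ) :
    dotProduct x ((cycleIntersectionMatrix n d).mulVec x) =
      -(∑ i, ((d i : ℝ) - 2) * x i ^ 2 + ∑ i, (x i - x (i + 1)) ^ 2) := by
  have hprev : ∑ i, x i * x (i - 1) = ∑ i, x i * x (i + 1) :=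
    Fintype.sum_equiv (Equiv.subRight 1) _ _ fun i => by simp [mul_comm]
  have hnext : ∑ i, x (i + 1) ^ 2 = ∑ i, x i ^ 2 :=
    Equiv.sum_comp (Equiv.addRight (1 : Fin n)) fun i => x i ^ 2
  have hdiag : ∀ i, x i * (-(d i : ℝ) * x i) = -((d i : ℝ) * x i ^ 2) := fun i => by ring
  simp only [dotProduct, cycleIntersectionMatrix_mulVec_apply, mul_add, hdiag, sub_sq, sub_mul,
    mul_assoc, Finset.sum_add_distrib, Finset.sum_sub_distrib, Finset.sum_neg_distrib, hprev, hnext,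
    ← Finset.mul_sum]
  ring

theorem sum_mul_sq_add_sum_sq_sub_add_one_pos {w x : Fin n → ℝ} (hw : ∀ i, 0 ≤ w i)
    (hw₀ : ∃ i, 0 < w i) (hx : x ≠ 0) :
    0 < ∑ i, w i * x i ^ 2 + ∑ i, (x i - x (i + 1)) ^ 2 := by
  have hwx : ∀ i ∈ Finset.univ, 0 ≤ w i * x i ^ 2 := fun i _ => mul_nonneg (hw i) (sq_nonneg _)
  have hdiff : ∀ i ∈ Finset.univ, 0 ≤ (x i - x (i + 1)) ^ 2 := fun i _ => sq_nonneg _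
  refine (add_nonneg (Finset.sum_nonneg hwx) (Finset.sum_nonneg hdiff)).lt_of_ne fun h => hx ?_
  obtain ⟨hwx₀, hdiff₀⟩ :=
    (add_eq_zero_iff_of_nonneg (Finset.sum_nonneg hwx) (Finset.sum_nonneg hdiff)).mp h.symm
  have hconst : ∀ i j, x i = x j := Fin.apply_eq_apply_of_apply_add_one fun i => by
    have := (Finset.sum_eq_zero_iff_of_nonneg hdiff).mp hdiff₀ i (Finset.mem_univ i)
    linarith [sub_eq_zero.mp (pow_eq_zero_iff two_ne_zero |>.mp this)]
  obtain ⟨i₀, hi₀⟩ := hw₀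
  have hxi₀ : x i₀ = 0 := by
    have := (Finset.sum_eq_zero_iff_of_nonneg hwx).mp hwx₀ i₀ (Finset.mem_univ i₀)
    exact pow_eq_zero_iff two_ne_zero |>.mp ((mul_eq_zero.mp this).resolve_left hi₀.ne')
  funext j
  rw [hconst j i₀, hxi₀, Pi.zero_apply]

end

theorem cycle_intersection_matrix_negDef_general (n : ℕ) [NeZero n] (d : Fin n → ℤ)
    (h2 : ∀ i, 2 ≤ d i) (h3 : ∃ i, 3 ≤ d i) :
    ∀ x : Fin n → ℝ, x ≠ 0 →
      dotProduct x ((cycleIntersectionMatrix n d).mulVec x) < 0 := by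
  intro x hx
  have hw : ∀ i, 0 ≤ (d i : ℝ) - 2 := fun i => sub_nonneg.mpr (mod_cast h2 i)
  have hw₀ : ∃ i, 0 < (d i : ℝ) - 2 := by
    obtain ⟨i, hi⟩ := h3
    exact ⟨i, sub_pos.mpr (mod_cast (by norm_num : (2 : ℤ) < 3).trans_le hi)⟩
  rw [dotProduct_cycleIntersectionMatrix_mulVec, neg_neg_iff_pos]
  exact sum_mul_sq_add_sum_sq_sub_add_one_pos hw hw₀ hx

theorem cycle_intersection_matrix_negDef (n : ℕ) [NeZero n] (hn : 3 ≤ n) (d : Fin n → ℤ)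
    (h2 : ∀ i, 2 ≤ d i) (h3 : ∃ i, 3 ≤ d i) :
    ∀ x : Fin n → ℝ, x ≠ 0 →
      dotProduct x ((cycleIntersectionMatrix n d).mulVec x) < 0 :=
  cycle_intersection_matrix_negDef_general n d h2 h3
end

section
/- Define the charge of a cycle d = (d_1,...,d_n) of integers by Q(d) = 12 + Σ_{i=1}^n (d_i - 3). If d and d' are dual cycles (d written as (a_1, 2^{b_1}, ..., a_k, 2^{b_k}) with a_i ≥ 3, b_i ≥ 0, and d' = (b_1+3, 2^{a_1-3}, ..., b_k+3, 2^{a_k-3})), then Q(d) + Q(d') = 24. -/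
/-- The cycle of self-intersections determined by block data `(a i, b i)`. -/
def cycleOfBlocks (k : ℕ) (a b : Fin k → ℕ) : List ℕ :=
  (List.ofFn (fun i : Fin k => (a i) :: List.replicate (b i) 2)).flatten

/-- The charge of a cycle `d`: `Q(d) = 12 + Σ (d i - 3)`. -/
def charge (l : List ℕ) : ℤ :=
  12 + (l.map (fun x => (x : ℤ) - 3)).sum

lemma charge_eq (l : List ℕ) :
    charge l = 12 + (l.map (fun x : ℕ => (x : ℤ) - 3)).sum := by
  induction l with
  | nil => simp [charge]
  | cons h t ih => simp_all [charge, List.flatMap_cons]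

lemma charge_cycleOfBlocks (k : ℕ) (a b : Fin k → ℕ) :
    charge (cycleOfBlocks k a b) =
      12 + ∑ i, (((a i : ℤ) - 3) - (b i : ℤ)) := by
  rw [cycleOfBlocks, charge_eq, List.map_flatten, List.sum_flatten,
    List.map_ofFn, List.map_ofFn, List.sum_ofFn]
  refine congrArg (12 + ·) (Finset.sum_congr rfl fun i _ => ?_)
  simp [Function.comp, List.sum_replicate, nsmul_eq_mul]
  ring

/-- The charges of dual cycles sum to 24. -/
theorem charge_add_charge_dual (k : ℕ) (hk : 0 < k) (a b : Fin k → ℕ)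
    (ha : ∀ i, 3 ≤ a i) :
    charge (cycleOfBlocks k a b) +
      charge (cycleOfBlocks k (fun i => b i + 3) (fun i => a i - 3)) = 24 := by
  rw [charge_cycleOfBlocks, charge_cycleOfBlocks]
  have h : ∀ i : Fin k, ((a i - 3 : ℕ) : ℤ) = (a i : ℤ) - 3 := fun i =>
    Nat.cast_sub (ha i)
  simp only [h]
  rw [show ∀ S1 S2 : ℤ, 12 + S1 + (12 + S2) = 24 + (S1 + S2) from fun _ _ => by ring,
    ← Finset.sum_add_distrib]
  have : ∀ i : Fin k, ((a i : ℤ) - 3 - (b i : ℤ)) +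
      (((b i + 3 : ℕ) : ℤ) - 3 - ((a i : ℤ) - 3)) = 0 := fun i => by push_cast; ring
  simp [this]
end

section
/- Let d = (d_1,...,d_n) with d_i ≥ 2 for all i and d_i ≥ 3 for some i (n ≥ 1). Then the trace of the matrix product N = Π_{i=1}^n [[0,1],[-1,d_i]] is strictly greater than 2. -/
private lemma monodromy_invariants (l : List ℤ) (hl : l ≠ []) (h2 : ∀ e ∈ l, 2 ≤ e) :
    let P := (l.map (fun e => !![(0:ℤ), 1; -1, e])).prod
    P 0 0 ≤ 0 ∧ -P 0 0 + 1 ≤ P 0 1 ∧ P 0 1 + 1 ≤ P 1 1 ∧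
      P 0 0 + P 0 1 ≤ P 1 0 + P 1 1 ∧ ((∃ e ∈ l, 3 ≤ e) → P 0 1 + 2 ≤ P 1 1) := by
  induction l using List.reverseRecOn with
  | nil => exact absurd rfl hl
  | append_singleton l e ih =>
    intro P
    have he : 2 ≤ e := h2 e (by simp)
    rcases eq_or_ne l [] with rfl | hne
    · simp only [P, List.map_append, List.map, List.prod_append, List.prod_cons,
        List.prod_nil, List.nil_append, one_mul, mul_one]
      refine ⟨?_, ?_, ?_, ?_, ?_⟩ <;>
        simp [Matrix.cons_val_zero, Matrix.cons_val_one] <;> omega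
    · have h2' : ∀ x ∈ l, 2 ≤ x := fun x hx => h2 x (by simp [hx])
      obtain ⟨ha, hb, hd, hcd, hs⟩ := ih hne h2'
      set Q := (l.map (fun e => !![(0:ℤ), 1; -1, e])).prod with hQ
      have hP : P = Q * !![(0:ℤ), 1; -1, e] := by
        simp [P, hQ, List.map_append]
      have e00 : P 0 0 = -Q 0 1 := by
        simp [hP, Matrix.mul_apply, Fin.sum_univ_two]
      have e01 : P 0 1 = Q 0 0 + Q 0 1 * e := by
        simp [hP, Matrix.mul_apply, Fin.sum_univ_two]
      have e10 : P 1 0 = -Q 1 1 := by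
        simp [hP, Matrix.mul_apply, Fin.sum_univ_two]
      have e11 : P 1 1 = Q 1 0 + Q 1 1 * e := by
        simp [hP, Matrix.mul_apply, Fin.sum_univ_two]
      have key1 : (e - 2) * (Q 1 1 - Q 0 1) ≥ 0 :=
        mul_nonneg (by omega) (by omega)
      refine ⟨by omega, ?_, ?_, ?_, ?_⟩
      · -- -P00 + 1 ≤ P01 : Q00 + e*Q01 ≥ Q01 + 1
        have : (e - 1) * Q 0 1 ≥ Q 0 1 := by nlinarith
        rw [e00, e01]; nlinarith
      · -- P01 + 1 ≤ P11 : (Q10 - Q00) + e(Q11 - Q01) ≥ 1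
        rw [e01, e11]; nlinarith
      · -- P00 + P01 ≤ P10 + P11
        rw [e00, e01, e10, e11]; nlinarith
      · -- strong
        rintro ⟨x, hx, hx3⟩
        rw [List.mem_append] at hx
        rcases hx with hx | hx
        · have : Q 0 1 + 2 ≤ Q 1 1 := hs ⟨x, hx, hx3⟩
          rw [e01, e11]; nlinarith
        · have : 3 ≤ e := by simpa using (List.mem_singleton.mp hx) ▸ hx3
          rw [e01, e11]; nlinarith

/-- The monodromy matrix of a negative-definite cycle has trace greater than 2. -/
theorem trace_monodromy_gt_two (n : ℕ) (hn : 1 ≤ n) (d : Fin n → ℤ)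
    (h2 : ∀ i, 2 ≤ d i) (h3 : ∃ i, 3 ≤ d i) :
    2 < ((List.ofFn (fun i : Fin n => !![0, 1; -1, d i])).prod).trace := by
  have hmap : (List.ofFn d).map (fun e => !![(0:ℤ), 1; -1, e]) =
      List.ofFn (fun i : Fin n => !![0, 1; -1, d i]) := by
    rw [List.map_ofFn]; rfl
  have hne : List.ofFn d ≠ [] := by
    simp [List.ofFn_eq_nil_iff]; omega
  have h2' : ∀ e ∈ List.ofFn d, 2 ≤ e := by
    intro e he
    rw [List.mem_ofFn] at he
    obtain ⟨i, rfl⟩ := he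
    exact h2 i
  obtain ⟨ha, hb, hd, hcd, hs⟩ := monodromy_invariants (List.ofFn d) hne h2'
  have hstrong := hs (by obtain ⟨i, hi⟩ := h3; exact ⟨d i, by simp [List.mem_ofFn], hi⟩)
  rw [← hmap]
  rw [Matrix.trace_fin_two]
  omega
end

section
/- Let e_{i-1}, e_i, e_{i+1}, e_{i+2} satisfy e_{i-1} + e_{i+1} = d_i e_i and e_i + e_{i+2} = d_{i+1} e_{i+1} in Z^2, with consecutive pairs forming oriented lattice bases. Apply the node-smoothing gluing map g defined in the basis (e_i, e_{i+1}) by the matrix [[2,1],[-1,0]] (so g(e_{i+1}) = e_i and g(e_i) = 2e_i - e_{i+1}). Then e_{i-1} + g(e_{i+2}) = (d_i + d_{i+1} - 2) e_i. -/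
/-- The determinant of the 2×2 matrix with columns `u` and `v`. -/
def detCols (u v : Fin 2 → ℤ) : ℤ := u 0 * v 1 - u 1 * v 0

/-- Smoothing a node of the anticanonical cycle: after applying the node-smoothing
gluing map `g` (with `g e_i = 2e_i - e_{i+1}` and `g e_{i+1} = e_i`), the merged
edge has negative self-intersection `d_i + d_{i+1} - 2`. -/
theorem node_smoothing_pseudofan (eim ei eip eipp : Fin 2 → ℤ) (di dip : ℤ)
    (h1 : detCols eim ei = 1) (h2 : detCols ei eip = 1) (h3 : detCols eip eipp = 1)
    (hrec1 : eim + eip = di • ei) (hrec2 : ei + eipp = dip • eip)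
    (g : (Fin 2 → ℤ) →ₗ[ℤ] (Fin 2 → ℤ))
    (hg1 : g ei = 2 • ei - eip) (hg2 : g eip = ei) :
    eim + g eipp = (di + dip - 2) • ei := by
  have heipp : eipp = dip • eip - ei := by
    have := hrec2; abel_nf; linear_combination (norm := abel) hrec2
  have : g eipp = dip • ei - (2 • ei - eip) := by
    rw [heipp, map_sub, map_smul, hg1, hg2]
  rw [this]
  have heim : eim = di • ei - eip := by linear_combination (norm := abel) hrec1
  rw [heim]
  module
end

section
/- Let d_1,...,d_n be a negative-definite cycle (d_i ≥ 2 for all i, d_i ≥ 3 for some i) and let N = Π_{i=1}^n [[0,1],[-1,d_i]]. Then no eigenvector of N has rational slope; equivalently, N has no fixed nonzero vector in Q^2, and in particular no toric surface has this boundary cycle (the linear recursion z_{i+1} = d_i z_i - z_{i-1} starting from a lattice basis never returns to its starting pair after n steps: (z_n, z_{n+1}) ≠ (z_0, z_1)). -/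
open Finset Matrix

theorem Function.Periodic.exists_lt_apply_add_eq {α : Type*} {f : ℤ → α} {n : ℕ}
    (hper : Function.Periodic f n) (hn : 1 ≤ n) (i s : ℤ) : ∃ k < n, f (k + s) = f i := by
  obtain ⟨y, ⟨hsy, hyn⟩, hfy⟩ := hper.exists_mem_Ico (by omega) i s
  exact ⟨(y - s).toNat, by omega, by rw [hfy, Int.toNat_of_nonneg (by omega), sub_add_cancel]⟩

theorem eq_zero_of_rec_of_initial_eq_zero {A : Type*} [AddGroup A] {e : ℕ → ℤ} {x : ℕ → A}
    (hrec : ∀ k, x (k + 2) = e k • x (k + 1) - x k) (h0 : x 0 = 0) (h1 : x 1 = 0) : x = 0 := by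
  have hpair : ∀ k, x k = 0 ∧ x (k + 1) = 0 := by
    intro k
    induction k with
    | zero => exact ⟨h0, h1⟩
    | succ k ih => exact ⟨ih.2, by rw [hrec, ih.1, ih.2, smul_zero, sub_zero]⟩
  exact funext fun k => (hpair k).1

theorem sum_range_energy_eq_zero {R : Type*} [CommRing R] {e : ℕ → ℤ} {x : ℕ → R} {n : ℕ}
    (hrec : ∀ k, x (k + 2) = e k • x (k + 1) - x k) (h0 : x n = x 0) (h1 : x (n + 1) = x 1) :
    ∑ k ∈ range n, ((e k - 2) * x (k + 1) ^ 2 + (x (k + 2) - x (k + 1)) ^ 2) = 0 := by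
  have hterm : ∀ k, ((e k : R) - 2) * x (k + 1) ^ 2 + (x (k + 2) - x (k + 1)) ^ 2
      = (x (k + 1 + 1) ^ 2 - x (k + 1) ^ 2) - (x (k + 1 + 1) * x (k + 1) - x (k + 1) * x k) := by
    intro k
    rw [hrec, zsmul_eq_mul]
    ring
  rw [sum_congr rfl fun k _ => hterm k, sum_sub_distrib,
    sum_range_sub (fun k => x (k + 1) ^ 2), sum_range_sub (fun k => x (k + 1) * x k), h0, h1]
  ring

theorem eq_zero_of_cyclic_rec {R : Type*} [CommRing R] [LinearOrder R] [IsStrictOrderedRing R]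
    {e : ℕ → ℤ} {x : ℕ → R} {n : ℕ} (hrec : ∀ k, x (k + 2) = e k • x (k + 1) - x k)
    (h2 : ∀ k < n, 2 ≤ e k) (h3 : ∃ j < n, 3 ≤ e j) (h0 : x n = x 0) (h1 : x (n + 1) = x 1) :
    x = 0 := by
  obtain ⟨j, hjn, hj⟩ := h3
  have hcoef : ∀ k < n, (0 : R) ≤ e k - 2 := fun k hk => by
    have : (2 : R) ≤ e k := by exact_mod_cast h2 k hk
    linarith
  have hterms := (sum_eq_zero_iff_of_nonneg fun k hk => by
    have := hcoef k (mem_range.1 hk); positivity).1 (sum_range_energy_eq_zero hrec h0 h1)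
  have hsplit : ∀ k < n, ((e k : R) - 2) * x (k + 1) ^ 2 = 0 ∧ x (k + 2) = x (k + 1) := by
    intro k hk
    have hk' := (add_eq_zero_iff_of_nonneg (by have := hcoef k hk; positivity) (sq_nonneg _)).1
      (hterms k (mem_range.2 hk))
    exact ⟨hk'.1, sub_eq_zero.1 (pow_eq_zero_iff two_ne_zero |>.1 hk'.2)⟩
  have hconst : ∀ k ≤ n, x (k + 1) = x 1 := by
    intro k hk
    induction k with
    | zero => rfl
    | succ k ih => rw [(hsplit k hk).2, ih (by omega)]
  have hx1 : x 1 = 0 := by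
    have hej : (0 : R) < e j - 2 := by
      have : (3 : R) ≤ e j := by exact_mod_cast hj
      linarith
    rw [← hconst j hjn.le]
    exact pow_eq_zero_iff two_ne_zero |>.1 ((mul_eq_zero.1 (hsplit j hjn).1).resolve_left hej.ne')
  have hx0 : x 0 = 0 := by
    obtain ⟨m, rfl⟩ : ∃ m, n = m + 1 := ⟨n - 1, by omega⟩
    rw [← h0, hconst m (by omega), hx1]
  exact eq_zero_of_rec_of_initial_eq_zero hrec hx0 hx1

section Transfer

variable {R : Type*} [CommRing R]

def transferProd (c : ℕ → R) (k : ℕ) : Matrix (Fin 2) (Fin 2) R :=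
  (List.ofFn fun i : Fin k => !![0, 1; -1, c i]).prod

theorem transferProd_zero (c : ℕ → R) : transferProd c 0 = 1 := rfl

theorem transferProd_succ (c : ℕ → R) (k : ℕ) :
    transferProd c (k + 1) = transferProd c k * !![0, 1; -1, c k] := by
  rw [transferProd, List.ofFn_succ', List.prod_concat]
  rfl

theorem map_transferProd {S : Type*} [CommRing S] (f : R →+* S) (c : ℕ → R) (k : ℕ) :
    (transferProd c k).map f = transferProd (fun i => f (c i)) k := by
  induction k with
  | zero => simp [transferProd_zero]
  | succ k ih =>
    rw [transferProd_succ, Matrix.map_mul, ih, transferProd_succ]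
    congr 1
    ext a b
    fin_cases a <;> fin_cases b <;> simp

/-- Chosen so that `w ᵥ* transferProd c k = ![-transferSeq c w k, transferSeq c w (k + 1)]`. -/
def transferSeq (c : ℕ → R) (w : Fin 2 → R) (k : ℕ) : R := -(w ᵥ* transferProd c k) 0

variable (c : ℕ → R) (w : Fin 2 → R)

@[simp]
theorem transferSeq_zero : transferSeq c w 0 = -w 0 := by
  rw [transferSeq, transferProd_zero, vecMul_one]

theorem transferSeq_add_one (k : ℕ) : transferSeq c w (k + 1) = (w ᵥ* transferProd c k) 1 := by
  rw [transferSeq, transferProd_succ, ← vecMul_vecMul]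
  simp [vecMul, dotProduct, Fin.sum_univ_two]

@[simp]
theorem transferSeq_one : transferSeq c w 1 = w 1 := by
  rw [transferSeq_add_one, transferProd_zero, vecMul_one]

theorem transferSeq_add_two (k : ℕ) :
    transferSeq c w (k + 2) = c k * transferSeq c w (k + 1) - transferSeq c w k := by
  rw [transferSeq_add_one, transferSeq_add_one, transferSeq, transferProd_succ, ← vecMul_vecMul]
  simp [vecMul, dotProduct, Fin.sum_univ_two]
  ring

theorem transferSeq_periodic_of_vecMul_eq_self {n : ℕ} (hw : w ᵥ* transferProd c n = w) :
    transferSeq c w n = transferSeq c w 0 ∧ transferSeq c w (n + 1) = transferSeq c w 1 := by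
  rw [transferSeq_zero, transferSeq_one, transferSeq_add_one, transferSeq, hw]
  exact ⟨rfl, rfl⟩

end Transfer

theorem Matrix.exists_vecMul_eq_self_of_mulVec_eq_self {K m : Type*} [CommRing K] [IsDomain K]
    [Fintype m] [DecidableEq m] {M : Matrix m m K} {v : m → K} (hv : v ≠ 0) (h : M *ᵥ v = v) :
    ∃ w ≠ 0, w ᵥ* M = w := by
  have hdet : (M - 1).det = 0 :=
    exists_mulVec_eq_zero_iff.1 ⟨v, hv, by rw [sub_mulVec, h, one_mulVec, sub_self]⟩
  obtain ⟨w, hw, hwM⟩ := exists_vecMul_eq_zero_iff.2 hdet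
  exact ⟨w, hw, by rwa [vecMul_sub, vecMul_one, sub_eq_zero] at hwM⟩

/-- For a negative-definite cycle, the monodromy `N` fixes no nonzero rational vector,
and the linear recursion `z (i+1) = d i • z i - z (i-1)` starting from an oriented
lattice basis never returns to its starting pair after `n` steps: no toric surface
has a negative-definite anticanonical cycle. -/
theorem negative_definite_cycle_not_toric (n : ℕ) (hn : 1 ≤ n) (d : ℤ → ℤ)
    (hper : ∀ i, d (i + n) = d i) (h2 : ∀ i, 2 ≤ d i) (h3 : ∃ i, 3 ≤ d i) :
    (∀ v : Fin 2 → ℚ,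
      (((List.ofFn (fun i : Fin n => !![0, 1; -1, d i])).prod).map
        (Int.cast : ℤ → ℚ)).mulVec v = v → v = 0) ∧
    ∀ z : ℤ → Fin 2 → ℤ, detCols (z 0) (z 1) = 1 →
      (∀ i : ℤ, z (i + 1) = d i • z i - z (i - 1)) →
      ¬(z n = z 0 ∧ z (n + 1) = z 1) := by
  obtain ⟨i₃, hi₃⟩ := h3
  have hwindow (s : ℤ) : ∃ k < n, 3 ≤ d (k + s) := by
    obtain ⟨k, hk, hdk⟩ := Function.Periodic.exists_lt_apply_add_eq hper hn i₃ s
    exact ⟨k, hk, hdk ▸ hi₃⟩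
  constructor
  · intro v hv
    by_contra hv0
    change (transferProd (fun k : ℕ => d k) n).map (Int.castRingHom ℚ) *ᵥ v = v at hv
    rw [map_transferProd] at hv
    obtain ⟨w, hw0, hw⟩ := exists_vecMul_eq_self_of_mulVec_eq_self hv0 hv
    have hx := eq_zero_of_cyclic_rec (e := fun k => d k)
      (fun k => by rw [transferSeq_add_two, zsmul_eq_mul]; rfl) (fun k _ => h2 k)
      (by simpa using hwindow 0) (transferSeq_periodic_of_vecMul_eq_self _ _ hw).1
      (transferSeq_periodic_of_vecMul_eq_self _ _ hw).2
    apply hw0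
    ext i
    fin_cases i
    · simpa using congrFun hx 0
    · simpa using congrFun hx 1
  · rintro z hdet hzrec ⟨hzn, hzn1⟩
    have hz0 (c : Fin 2) : z 0 c = 0 := by
      have hx := eq_zero_of_cyclic_rec (e := fun k => d (k + 1)) (x := fun k => z k c)
        (fun k => by
          have := congrFun (hzrec (k + 1)) c
          push_cast
          simpa [add_assoc] using this)
        (fun k _ => h2 _) (hwindow 1) (by simp [hzn]) (by simp [hzn1])
      simpa using congrFun hx 0
    simp [detCols, hz0] at hdet
end
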